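/- arXiv:2006.16971 — 3 statements merged into one kernel-verified Lean document; each statement's English description precedes it below -/
import Mathlib

section
/- Let X be an integrable real random variable on a probability space taking values almost surely in a compact interval [a,b] with a < b, and let f : ℝ → ℝ be twice continuously differentiable on [a,b]. If there are constants with 0 ≤ m ≤ M such that −M ≤ f''(x) ≤ −m for all x ∈ [a,b] (so f is concave on [a,b]), then the Jensen defect is bounded by the variance of X: f(E[X]) − E[f(X)] ≤ (1/2)·M·Var[X]. -/
/-!
The lower bound `f'' ≥ -M` makes `g x = f x + M / 2 * x ^ 2` convex on `[a, b]`, so Jensen's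
inequality `g (E[X]) ≤ E[g X]` holds; rearranged with `Var[X] = E[X ^ 2] - E[X] ^ 2` it is the
claimed bound on the Jensen defect of `f`.
-/

open MeasureTheory ProbabilityTheory Real Set Filter Topology

theorem iteratedDerivWithin_eq_iterate_deriv_of_mem_interior {𝕜 F : Type*}
    [NontriviallyNormedField 𝕜] [NormedAddCommGroup F] [NormedSpace 𝕜 F]
    {n : ℕ} {f : 𝕜 → F} {s : Set 𝕜} {x : 𝕜} (hx : x ∈ interior s) :
    iteratedDerivWithin n f s x = deriv^[n] f x := by
  have hs : s =ᶠ[𝓝 x] (univ : Set 𝕜) := eventuallyEq_univ.2 (mem_interior_iff_mem_nhds.1 hx)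
  rw [iteratedDerivWithin, iteratedFDerivWithin_congr_set hs, ← iteratedDerivWithin,
    iteratedDerivWithin_univ, iteratedDeriv_eq_iterate]

theorem convexOn_add_mul_sq_of_neg_le_iteratedDerivWithin {D : Set ℝ} (hD : Convex ℝ D)
    {f : ℝ → ℝ} {M : ℝ} (hf : ContDiffOn ℝ 2 f D)
    (hf'' : ∀ x ∈ interior D, -M ≤ iteratedDerivWithin 2 f D x) :
    ConvexOn ℝ D (fun x ↦ f x + M / 2 * x ^ 2) := by
  have hfo : ContDiffOn ℝ 2 f (interior D) := hf.mono interior_subset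
  have hdf : DifferentiableOn ℝ f (interior D) := hfo.differentiableOn (by norm_num)
  have hddf : DifferentiableOn ℝ (deriv f) (interior D) :=
    (hfo.deriv_of_isOpen isOpen_interior (m := 1) (by norm_num)).differentiableOn one_ne_zero
  have hsq (x : ℝ) : HasDerivAt (fun x ↦ M / 2 * x ^ 2) (M * x) x := by
    refine ((hasDerivAt_pow 2 x).const_mul (M / 2)).congr_deriv ?_
    norm_num
    ring
  refine convexOn_of_hasDerivWithinAt2_nonneg hD (f' := fun x ↦ deriv f x + M * x)
    (f'' := fun x ↦ deriv^[2] f x + M) (hf.continuousOn.add (by fun_prop)) ?_ ?_ ?_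
  · intro x hx
    exact ((hdf.differentiableAt (isOpen_interior.mem_nhds hx)).hasDerivAt.add
      (hsq x)).hasDerivWithinAt
  · intro x hx
    exact ((hddf.differentiableAt (isOpen_interior.mem_nhds hx)).hasDerivAt.add
      ((hasDerivAt_id x).const_mul M |>.congr_deriv (mul_one M))).hasDerivWithinAt
  · intro x hx
    have hM := hf'' x hx
    rw [iteratedDerivWithin_eq_iterate_deriv_of_mem_interior hx] at hM
    linarith

theorem ContinuousOn.integrable_comp_of_ae_mem {Ω α E : Type*} [MeasurableSpace Ω]
    {μ : Measure Ω} [IsFiniteMeasure μ] [TopologicalSpace α] [T2Space α] [MeasurableSpace α]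
    [OpensMeasurableSpace α] [NormedAddCommGroup E] {f : α → E} {K : Set α}
    (hf : ContinuousOn f K) (hK : IsCompact K) {X : Ω → α} (hX : AEMeasurable X μ)
    (hXK : ∀ᵐ ω ∂μ, X ω ∈ K) : Integrable (fun ω ↦ f (X ω)) μ := by
  have hmap : (μ.map X).restrict K = μ.map X :=
    Measure.restrict_eq_self_of_ae_mem ((ae_map_iff hX hK.measurableSet).2 hXK)
  have hfm : AEStronglyMeasurable f (μ.map X) :=
    hmap ▸ hf.aestronglyMeasurable_of_isCompact hK hK.measurableSet
  obtain ⟨C, hC⟩ := hK.exists_bound_of_continuousOn hf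
  exact .of_bound (hfm.comp_aemeasurable hX) C (hXK.mono fun ω hω ↦ hC _ hω)

theorem sub_integral_le_mul_variance_of_convexOn_add_mul_sq {Ω : Type*} [MeasurableSpace Ω]
    {μ : Measure Ω} [IsProbabilityMeasure μ] {s : Set ℝ} (hs : IsClosed s) {f : ℝ → ℝ} {M : ℝ}
    (hf : ContinuousOn f s) (hconv : ConvexOn ℝ s (fun x ↦ f x + M / 2 * x ^ 2))
    {X : Ω → ℝ} (hXs : ∀ᵐ ω ∂μ, X ω ∈ s) (hX : MemLp X 2 μ)
    (hfX : Integrable (fun ω ↦ f (X ω)) μ) :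
    f (μ[X]) - μ[fun ω ↦ f (X ω)] ≤ M / 2 * Var[X; μ] := by
  have hsq : Integrable (fun ω ↦ M / 2 * X ω ^ 2) μ := hX.integrable_sq.const_mul _
  have jensen := hconv.map_integral_le (hf.add (by fun_prop)) hs hXs
    (hX.integrable one_le_two) (hfX.add hsq)
  rw [integral_add hfX hsq, integral_const_mul] at jensen
  rw [variance_eq_sub hX]
  simp only [Pi.pow_apply]
  linarith

theorem holder_defect_formula_general
    {Ω : Type*} [MeasureSpace Ω] [IsProbabilityMeasure (ℙ : Measure Ω)]
    (X : Ω → ℝ) (hX : Integrable X ℙ)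
    (a b : ℝ)
    (hrange : ∀ᵐ ω ∂(ℙ : Measure Ω), X ω ∈ Icc a b)
    (f : ℝ → ℝ) (hf : ContDiffOn ℝ 2 f (Icc a b))
    (m M : ℝ)
    (hf'' : ∀ x ∈ Icc a b,
      -M ≤ iteratedDerivWithin 2 f (Icc a b) x ∧
      iteratedDerivWithin 2 f (Icc a b) x ≤ -m) :
    f (∫ ω, X ω) - ∫ ω, f (X ω) ≤ (1 / 2) * M * variance X ℙ := by
  have hconv := convexOn_add_mul_sq_of_neg_le_iteratedDerivWithin (convex_Icc a b) hf
    fun x hx ↦ (hf'' x (interior_subset hx)).1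
  have hfX := hf.continuousOn.integrable_comp_of_ae_mem isCompact_Icc hX.aemeasurable hrange
  have hdefect := sub_integral_le_mul_variance_of_convexOn_add_mul_sq isClosed_Icc
    hf.continuousOn hconv hrange (memLp_of_bounded hrange hX.aestronglyMeasurable 2) hfX
  linarith

/-- Hölder's defect formula for concave functions, in probabilistic notation:
if `X` is an integrable random variable taking values a.s. in `[a, b]`,
and `f` is twice continuously differentiable on `[a, b]` with
`-M ≤ f'' ≤ -m ≤ 0` on `[a, b]`, then the Jensen defect satisfies
`f (E[X]) - E[f X] ≤ (1/2) * M * Var[X]`. -/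
theorem holder_defect_formula
    {Ω : Type*} [MeasureSpace Ω] [IsProbabilityMeasure (ℙ : Measure Ω)]
    (X : Ω → ℝ) (hX : Integrable X ℙ)
    (a b : ℝ) (hab : a < b)
    (hrange : ∀ᵐ ω ∂(ℙ : Measure Ω), X ω ∈ Icc a b)
    (f : ℝ → ℝ) (hf : ContDiffOn ℝ 2 f (Icc a b))
    (m M : ℝ) (hm : 0 ≤ m) (hmM : m ≤ M)
    (hf'' : ∀ x ∈ Icc a b,
      -M ≤ iteratedDerivWithin 2 f (Icc a b) x ∧
      iteratedDerivWithin 2 f (Icc a b) x ≤ -m) :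
    f (∫ ω, X ω) - ∫ ω, f (X ω) ≤ (1 / 2) * M * variance X ℙ :=
  holder_defect_formula_general X hX a b hrange f hf m M hf''
end

section
/- Assume E[σ̂_t²] = ((n−1)/n)·σ_t², Var[σ̂_t²] = (2(n−1)/n²)·σ_t⁴, and σ̂_t² ≥ q·σ_t²/n almost surely for some real q > 0. Set a = (N/(N+n))·σ_s² + (q/(N+n))·σ_t². Then the expectation of σ̄ = √(σ̄²) satisfies the two-sided bound: √((N/(N+n))·σ_s² + ((n−1)/(N+n))·σ_t²) − ((n−1)/(4·(N+n)²))·σ_t⁴·a^(−3/2) ≤ E[σ̄] ≤ √((N/(N+n))·σ_s² + ((n−1)/(N+n))·σ_t²). -/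
/-!
Write `σ̄² = c + k σ̂_t²` with `c = N/(N+n) σ_s²` and `k = n/(N+n)`. Its mean is
`m = c + (n-1)/(N+n) σ_t²`, its variance is `k² Var σ̂_t² = 2(n-1)/(N+n)² σ_t⁴`, and on the
confidence event it stays above `a`. The upper bound is Jensen's inequality for the concave `√`.
For the lower bound, `|√''| ≤ a^(-3/2)/4` on `[a, ∞)`, so there `√` lies above its tangent at `m`
minus `(y - m)² a^(-3/2) / 8`; taking expectations, the linear term vanishes and the quadratic
term becomes the variance.
-/

open MeasureTheory ProbabilityTheory Real

namespace Real

lemma sqrt_le_one_add_abs (x : ℝ) : √x ≤ 1 + |x| := by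
  rw [sqrt_le_iff]
  constructor <;> nlinarith [abs_nonneg x, le_abs_self x]

lemma sqrt_add_sub_div_sub_sq_div_le_sqrt {a m y : ℝ} (ha : 0 < a) (ham : a ≤ m) (hay : a ≤ y) :
    √m + (y - m) / (2 * √m) - (y - m) ^ 2 / (8 * (a * √a)) ≤ √y := by
  obtain ⟨w, hw, rfl⟩ : ∃ w, 0 < w ∧ a = w ^ 2 := ⟨√a, sqrt_pos.2 ha, (sq_sqrt ha.le).symm⟩
  obtain ⟨v, hv, rfl⟩ : ∃ v, w ≤ v ∧ m = v ^ 2 :=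
    ⟨√m, (le_sqrt' hw).2 ham, (sq_sqrt (ha.le.trans ham)).symm⟩
  obtain ⟨u, hu, rfl⟩ : ∃ u, w ≤ u ∧ y = u ^ 2 :=
    ⟨√y, (le_sqrt' hw).2 hay, (sq_sqrt (ha.le.trans hay)).symm⟩
  have hv0 : 0 < v := hw.trans_le hv
  rw [sqrt_sq hw.le, sqrt_sq hv0.le, sqrt_sq (hw.le.trans hu)]
  have key : 4 * w ^ 3 ≤ v * (u + v) ^ 2 := by
    nlinarith [mul_le_mul hv (pow_le_pow_left₀ (by positivity) (add_le_add hu hv) 2)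
      (by positivity) (by positivity)]
  have hcoef : 1 / (2 * v) ≤ (u + v) ^ 2 / (8 * w ^ 3) := by
    rw [div_le_div_iff₀ (by positivity) (by positivity)]
    linarith
  calc v + (u ^ 2 - v ^ 2) / (2 * v) - (u ^ 2 - v ^ 2) ^ 2 / (8 * (w ^ 2 * w))
      = u + (u - v) ^ 2 * (1 / (2 * v) - (u + v) ^ 2 / (8 * w ^ 3)) := by
        field_simp
        ring
    _ ≤ u := add_le_of_nonpos_right
        (mul_nonpos_of_nonneg_of_nonpos (sq_nonneg _) (sub_nonpos.2 hcoef))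

lemma rpow_neg_three_div_two {a : ℝ} (ha : 0 ≤ a) : a ^ (-(3 : ℝ) / 2) = (a * √a)⁻¹ := by
  rw [neg_div, rpow_neg ha, show (3 : ℝ) / 2 = 1 + 1 / 2 by norm_num,
    rpow_add' ha (by norm_num), rpow_one, sqrt_eq_rpow]

end Real

namespace MeasureTheory

variable {Ω : Type*} [MeasurableSpace Ω] {μ : Measure Ω} {X : Ω → ℝ}

lemma Integrable.sqrt [IsFiniteMeasure μ] (hX : Integrable X μ) :
    Integrable (fun ω ↦ √(X ω)) μ :=
  ((integrable_const 1).add hX.abs).mono' (Real.continuous_sqrt.comp_aestronglyMeasurable hX.1)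
    (ae_of_all _ fun ω ↦ by
      simpa [abs_of_nonneg (Real.sqrt_nonneg _)] using Real.sqrt_le_one_add_abs (X ω))

variable [IsProbabilityMeasure μ]

lemma integral_sqrt_le_sqrt_integral (hX : Integrable X μ) (h0 : 0 ≤ᵐ[μ] X) :
    ∫ ω, √(X ω) ∂μ ≤ √(μ[X]) :=
  Real.strictConcaveOn_sqrt.concaveOn.le_map_integral Real.continuous_sqrt.continuousOn
    isClosed_Ici h0 hX hX.sqrt

lemma sqrt_integral_sub_variance_le_integral_sqrt {a : ℝ} (ha : 0 < a) (hX : MemLp X 2 μ)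
    (haX : ∀ᵐ ω ∂μ, a ≤ X ω) :
    √(μ[X]) - Var[X; μ] / 8 * a ^ (-(3 : ℝ) / 2) ≤ ∫ ω, √(X ω) ∂μ := by
  have hXi : Integrable X μ := hX.integrable one_le_two
  set m := μ[X]
  have ham : a ≤ m := by simpa using integral_mono_ae (integrable_const a) hXi haX
  have hdev : Integrable (fun ω ↦ (X ω - m) ^ 2) μ := (hX.sub (memLp_const m)).integrable_sq
  have hlin : ∫ ω, (X ω - m) / (2 * √m) ∂μ = 0 := by
    rw [integral_div, integral_sub hXi (integrable_const m)]
    simp [m]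
  have hlin_int : Integrable (fun ω ↦ (X ω - m) / (2 * √m)) μ :=
    (hXi.sub (integrable_const m)).div_const _
  have htan_int : Integrable (fun ω ↦ √m + (X ω - m) / (2 * √m)) μ :=
    (integrable_const _).add hlin_int
  calc √m - Var[X; μ] / 8 * a ^ (-(3 : ℝ) / 2)
      = ∫ ω, (√m + (X ω - m) / (2 * √m) - (X ω - m) ^ 2 / (8 * (a * √a))) ∂μ := by
        rw [integral_sub htan_int (hdev.div_const _),
          integral_add (integrable_const _) hlin_int, hlin, integral_div,
          ← variance_eq_integral hX.aemeasurable, Real.rpow_neg_three_div_two ha.le]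
        simp
        ring
    _ ≤ ∫ ω, √(X ω) ∂μ :=
        integral_mono_ae (by fun_prop) hXi.sqrt
          (haX.mono fun _ h ↦ Real.sqrt_add_sub_div_sub_sq_div_le_sqrt ha ham h)

end MeasureTheory

theorem expectation_sqrt_mixed_variance_bounds_general
    {Ω : Type*} [MeasureSpace Ω] [IsProbabilityMeasure (ℙ : Measure Ω)]
    (σs σt N q : ℝ) (n : ℕ)
    (hσt : 0 < σt) (hn : 2 ≤ n) (hN : 0 ≤ N) (hq : 0 < q)
    (σt2hat : Ω → ℝ)
    (hL2 : MemLp σt2hat 2 ℙ)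
    (hmean : ∫ ω, σt2hat ω = (((n : ℝ) - 1) / n) * σt ^ 2)
    (hvar : variance σt2hat ℙ = (2 * ((n : ℝ) - 1) / (n : ℝ) ^ 2) * σt ^ 4)
    (hlb : ∀ᵐ ω ∂(ℙ : Measure Ω), q * σt ^ 2 / n ≤ σt2hat ω) :
    Real.sqrt (N / (N + n) * σs ^ 2 + ((n : ℝ) - 1) / (N + n) * σt ^ 2)
      - ((n : ℝ) - 1) / (4 * (N + n) ^ 2) * σt ^ 4
        * (N / (N + n) * σs ^ 2 + q / (N + n) * σt ^ 2) ^ (-(3 : ℝ) / 2)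
      ≤ ∫ ω, Real.sqrt (N / (N + n) * σs ^ 2 + (n : ℝ) / (N + n) * σt2hat ω)
    ∧ ∫ ω, Real.sqrt (N / (N + n) * σs ^ 2 + (n : ℝ) / (N + n) * σt2hat ω)
      ≤ Real.sqrt (N / (N + n) * σs ^ 2 + ((n : ℝ) - 1) / (N + n) * σt ^ 2) := by
  have hn0 : (0 : ℝ) < n := by exact_mod_cast (by omega : 0 < n)
  have hNn : 0 < N + n := by linarith
  set X : Ω → ℝ := fun ω ↦ N / (N + n) * σs ^ 2 + (n : ℝ) / (N + n) * σt2hat ω with hX_def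
  have hX : MemLp X 2 ℙ :=
    (memLp_const (N / (N + n) * σs ^ 2)).add (hL2.const_mul ((n : ℝ) / (N + n)))
  have hmeanX : ℙ[X] = N / (N + n) * σs ^ 2 + ((n : ℝ) - 1) / (N + n) * σt ^ 2 := by
    rw [hX_def, integral_add (integrable_const _) ((hL2.integrable one_le_two).const_mul _),
      integral_const, probReal_univ, one_smul, integral_const_mul, hmean]
    field_simp
  have hvarX : Var[X; ℙ] = ((n : ℝ) / (N + n)) ^ 2 * Var[σt2hat; ℙ] := by
    rw [hX_def, variance_const_add (hL2.1.const_mul _), variance_const_mul]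
  have hlbX : ∀ᵐ ω ∂(ℙ : Measure Ω), N / (N + n) * σs ^ 2 + q / (N + n) * σt ^ 2 ≤ X ω := by
    filter_upwards [hlb] with ω h
    have hq' : q / (N + n) * σt ^ 2 = (n : ℝ) / (N + n) * (q * σt ^ 2 / n) := by field_simp
    simp only [hX_def, hq']
    gcongr
  have ha : 0 < N / (N + n) * σs ^ 2 + q / (N + n) * σt ^ 2 := by positivity
  refine ⟨?_, ?_⟩
  · have lower := sqrt_integral_sub_variance_le_integral_sqrt ha hX hlbX
    rw [hmeanX, hvarX, hvar] at lower
    convert lower using 3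
    field_simp
    ring
  · rw [← hmeanX]
    exact integral_sqrt_le_sqrt_integral (hX.integrable one_le_two)
      (hlbX.mono fun ω h ↦ ha.le.trans h)

/-- Lemma 3 of the paper: two-sided bound on the expectation of
`σ̄ = √(σ̄²)` where `σ̄² = (N/(N+n))·σ_s² + (n/(N+n))·σ̂_t²`,
given the moments of the sample variance `σ̂_t²` and an almost-sure
lower bound `σ̂_t² ≥ q·σ_t²/n` (the confidence event). -/
theorem expectation_sqrt_mixed_variance_bounds
    {Ω : Type*} [MeasureSpace Ω] [IsProbabilityMeasure (ℙ : Measure Ω)]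
    (σs σt N q : ℝ) (n : ℕ)
    (hσs : 0 < σs) (hσt : 0 < σt) (hn : 2 ≤ n) (hN : 0 ≤ N) (hq : 0 < q)
    (σt2hat : Ω → ℝ)
    (hint : Integrable σt2hat ℙ) (hL2 : MemLp σt2hat 2 ℙ)
    (hmean : ∫ ω, σt2hat ω = (((n : ℝ) - 1) / n) * σt ^ 2)
    (hvar : variance σt2hat ℙ = (2 * ((n : ℝ) - 1) / (n : ℝ) ^ 2) * σt ^ 4)
    (hlb : ∀ᵐ ω ∂(ℙ : Measure Ω), q * σt ^ 2 / n ≤ σt2hat ω) :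
    Real.sqrt (N / (N + n) * σs ^ 2 + ((n : ℝ) - 1) / (N + n) * σt ^ 2)
      - ((n : ℝ) - 1) / (4 * (N + n) ^ 2) * σt ^ 4
        * (N / (N + n) * σs ^ 2 + q / (N + n) * σt ^ 2) ^ (-(3 : ℝ) / 2)
      ≤ ∫ ω, Real.sqrt (N / (N + n) * σs ^ 2 + (n : ℝ) / (N + n) * σt2hat ω)
    ∧ ∫ ω, Real.sqrt (N / (N + n) * σs ^ 2 + (n : ℝ) / (N + n) * σt2hat ω)
      ≤ Real.sqrt (N / (N + n) * σs ^ 2 + ((n : ℝ) - 1) / (N + n) * σt ^ 2) :=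
  expectation_sqrt_mixed_variance_bounds_general σs σt N q n hσt hn hN hq σt2hat hL2 hmean hvar hlb
end

section
/- Fix real numbers μ_s, μ_t, reals σ_s > 0, σ_t > 0, and a real N ≥ 0, and let (q_n)_{n≥2} be a sequence of positive reals with q_n/n → 1 as n → ∞ (as holds for the chi-square quantiles q_n = χ²_{1−α/2, n−1}). Then the upper bound of Proposition 1 vanishes in the large-sample limit: U(N,n,q_n) = L(N,n) + σ_t⁵·((n−1)/(2·(N+n)²))·((N/(N+n))·σ_s² + (q_n/(N+n))·σ_t²)^(−3/2) tends to 0 as n tends to infinity, where L(N,n) = (σ_t − √((N/(N+n))·σ_s² + ((n−1)/(N+n))·σ_t²))² + (N/(N+n))²·(μ_t − μ_s)² + (n/(N+n)²)·σ_t². -/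
open Real Filter Topology

/-! Each of the weights `N/(N+n)`, `n/(N+n)`, `(n-1)/(N+n)` and `q_n/(N+n)` has a limit
(`0`, `1`, `1`, `1`), while the coefficients `n/(N+n)²` and `(n-1)/(2(N+n)²)` are `O(1/n)`.
Hence the interpolated variance tends to `σ_t²`, the square-root term of `L` tends to
`(σ_t - σ_t)² = 0`, and the extra term of `U` is a vanishing coefficient times the bounded
factor `(·)^(-3/2)`, which converges to `σ_t⁻³` since its base tends to `σ_t² ≠ 0`. -/

section Weights

variable (N : ℝ)

theorem tendsto_const_div_const_add_natCast :
    Tendsto (fun n : ℕ => N / (N + n)) atTop (𝓝 0) := by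
  simpa using tendsto_add_mul_div_add_mul_atTop_nhds N N 0 one_ne_zero

theorem tendsto_natCast_div_const_add_natCast :
    Tendsto (fun n : ℕ => (n : ℝ) / (N + n)) atTop (𝓝 1) := by
  simpa using tendsto_add_mul_div_add_mul_atTop_nhds 0 N 1 one_ne_zero

theorem tendsto_natCast_sub_one_div_const_add_natCast :
    Tendsto (fun n : ℕ => ((n : ℝ) - 1) / (N + n)) atTop (𝓝 1) := by
  simpa [neg_add_eq_sub] using tendsto_add_mul_div_add_mul_atTop_nhds (-1) N 1 one_ne_zero

theorem Filter.Tendsto.div_const_add_natCast {a : ℕ → ℝ} {L : ℝ}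
    (h : Tendsto (fun n : ℕ => a n / n) atTop (𝓝 L)) :
    Tendsto (fun n : ℕ => a n / (N + n)) atTop (𝓝 L) := by
  have hprod := h.mul (tendsto_natCast_div_const_add_natCast N)
  rw [mul_one] at hprod
  refine hprod.congr' ?_
  filter_upwards [eventually_ne_atTop 0] with n hn
  have : (n : ℝ) ≠ 0 := Nat.cast_ne_zero.mpr hn
  rw [div_mul_div_comm, mul_comm (n : ℝ), mul_div_mul_right _ _ this]

theorem Filter.Tendsto.div_const_add_natCast_sq {a : ℕ → ℝ} {L : ℝ}
    (h : Tendsto (fun n : ℕ => a n / (N + n)) atTop (𝓝 L)) :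
    Tendsto (fun n : ℕ => a n / (N + n) ^ 2) atTop (𝓝 0) := by
  have hinv : Tendsto (fun n : ℕ => (N + n : ℝ)⁻¹) atTop (𝓝 0) :=
    (tendsto_atTop_add_const_left _ N tendsto_natCast_atTop_atTop).inv_tendsto_atTop
  simpa [div_eq_mul_inv, pow_two, mul_assoc] using h.mul hinv

end Weights

/-- `L(N, n)` of Proposition 1. -/
noncomputable def lowerBound (μs μt σs σt N : ℝ) (n : ℕ) : ℝ :=
  (σt - √(N / (N + n) * σs ^ 2 + ((n : ℝ) - 1) / (N + n) * σt ^ 2)) ^ 2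
    + (N / (N + n)) ^ 2 * (μt - μs) ^ 2 + (n : ℝ) / (N + n) ^ 2 * σt ^ 2

/-- `U(N, n, q)` of Proposition 1. -/
noncomputable def upperBound (μs μt σs σt N : ℝ) (n : ℕ) (q : ℝ) : ℝ :=
  lowerBound μs μt σs σt N n
    + σt ^ 5 * (((n : ℝ) - 1) / (2 * (N + n) ^ 2))
      * (N / (N + n) * σs ^ 2 + q / (N + n) * σt ^ 2) ^ (-(3 : ℝ) / 2)

theorem tendsto_lowerBound (μs μt σs σt N : ℝ) (hσt : 0 ≤ σt) :
    Tendsto (fun n : ℕ => lowerBound μs μt σs σt N n) atTop (𝓝 0) := by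
  have hvar : Tendsto (fun n : ℕ => N / (N + n) * σs ^ 2 + ((n : ℝ) - 1) / (N + n) * σt ^ 2)
      atTop (𝓝 (σt ^ 2)) := by
    simpa using ((tendsto_const_div_const_add_natCast N).mul_const (σs ^ 2)).add
      ((tendsto_natCast_sub_one_div_const_add_natCast N).mul_const (σt ^ 2))
  have hsqrt := hvar.sqrt
  rw [Real.sqrt_sq hσt] at hsqrt
  have hmean := ((tendsto_const_div_const_add_natCast N).pow 2).mul_const ((μt - μs) ^ 2)
  have hsample :=
    ((tendsto_natCast_div_const_add_natCast N).div_const_add_natCast_sq N).mul_const (σt ^ 2)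
  simpa [lowerBound] using
    (((tendsto_const_nhds (x := σt)).sub hsqrt).pow 2 |>.add hmean).add hsample

theorem tendsto_upperBound (μs μt σs σt N : ℝ) (hσt : 0 < σt) (q : ℕ → ℝ)
    (hq : Tendsto (fun n : ℕ => q n / n) atTop (𝓝 1)) :
    Tendsto (fun n : ℕ => upperBound μs μt σs σt N n (q n)) atTop (𝓝 0) := by
  have hcoef : Tendsto (fun n : ℕ => ((n : ℝ) - 1) / (2 * (N + n) ^ 2)) atTop (𝓝 0) := by
    simpa [div_mul_eq_div_div_swap] using
      ((tendsto_natCast_sub_one_div_const_add_natCast N).div_const_add_natCast_sq N).div_const 2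
  have hvar : Tendsto (fun n : ℕ => N / (N + n) * σs ^ 2 + q n / (N + n) * σt ^ 2)
      atTop (𝓝 (σt ^ 2)) := by
    simpa using ((tendsto_const_div_const_add_natCast N).mul_const (σs ^ 2)).add
      ((hq.div_const_add_natCast N).mul_const (σt ^ 2))
  have hpow := hvar.rpow_const (p := -(3 : ℝ) / 2) (Or.inl (by positivity))
  simpa [upperBound] using (tendsto_lowerBound μs μt σs σt N hσt.le).add
    (((tendsto_const_nhds (x := σt ^ 5)).mul hcoef).mul hpow)

theorem upper_bound_tendsto_zero_general
    (μs μt σs σt N : ℝ) (hσt : 0 < σt)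
    (q : ℕ → ℝ)
    (hqlim : Tendsto (fun n : ℕ => q n / n) atTop (𝓝 1)) :
    Tendsto
      (fun n : ℕ =>
        ((σt - Real.sqrt (N / (N + n) * σs ^ 2 + ((n : ℝ) - 1) / (N + n) * σt ^ 2)) ^ 2
            + (N / (N + n)) ^ 2 * (μt - μs) ^ 2 + (n : ℝ) / (N + n) ^ 2 * σt ^ 2)
          + σt ^ 5 * (((n : ℝ) - 1) / (2 * (N + n) ^ 2))
            * (N / (N + n) * σs ^ 2 + q n / (N + n) * σt ^ 2) ^ (-(3 : ℝ) / 2))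
      atTop (𝓝 0) :=
  tendsto_upperBound μs μt σs σt N hσt q hqlim

/-- The upper bound `U(N, n, q_n)` of Proposition 1 vanishes in the
large-sample limit `n → ∞`, for any sequence of positive reals `q_n`
with `q_n / n → 1` (as holds for the chi-square quantiles). -/
theorem upper_bound_tendsto_zero
    (μs μt σs σt N : ℝ) (hσs : 0 < σs) (hσt : 0 < σt) (hN : 0 ≤ N)
    (q : ℕ → ℝ) (hq : ∀ n, 2 ≤ n → 0 < q n)
    (hqlim : Tendsto (fun n : ℕ => q n / n) atTop (𝓝 1)) :
    Tendsto
      (fun n : ℕ =>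
        ((σt - Real.sqrt (N / (N + n) * σs ^ 2 + ((n : ℝ) - 1) / (N + n) * σt ^ 2)) ^ 2
            + (N / (N + n)) ^ 2 * (μt - μs) ^ 2 + (n : ℝ) / (N + n) ^ 2 * σt ^ 2)
          + σt ^ 5 * (((n : ℝ) - 1) / (2 * (N + n) ^ 2))
            * (N / (N + n) * σs ^ 2 + q n / (N + n) * σt ^ 2) ^ (-(3 : ℝ) / 2))
      atTop (𝓝 0) :=
  upper_bound_tendsto_zero_general μs μt σs σt N hσt q hqlim
end
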